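/- arXiv:2301.03993 — 2 statements merged into one kernel-verified Lean document; each statement's English description precedes it below -/
import Mathlib

section
/- Let 1 < p < ∞ and let g : ℝ → ℝ be an increasing differentiable function. Define G(t) = ∫₀ᵗ (g'(τ))^(1/p) dτ. Then for all a, b ∈ ℝ, J_p(a - b)·(g(a) - g(b)) ≥ |G(a) - G(b)|^p, where J_p(t) = |t|^(p-2) t. -/
/-- `J_p(t) = |t|^(p-2) t`. -/
noncomputable def Jp (p t : ℝ) : ℝ := |t| ^ (p - 2) * t

/-!
With `G a - G b = ∫_b^a (g')^(1/p)` for `b ≤ a`, Hölder's inequality against the constant `1` on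
`[b, a]` gives `(G a - G b)^p ≤ (a - b)^(p-1) ∫_b^a g'`, and Lebesgue's inequality
`∫_b^a g' ≤ g a - g b`, valid for every monotone `g`, finishes the proof. The case `a < b`
follows by symmetry, `J_p` being odd.
-/

open MeasureTheory Set

namespace MeasureTheory

variable {α : Type*} [MeasurableSpace α] {μ : Measure α} {h : α → ℝ} {p : ℝ}

theorem Integrable.memLp_rpow_one_div (hint : Integrable h μ) (h0 : 0 ≤ᵐ[μ] h) (hp : 0 < p) :
    MemLp (fun x => h x ^ (1 / p)) (ENNReal.ofReal p) μ := by
  have hnorm := (memLp_one_iff_integrable.2 hint).norm_rpow_div (ENNReal.ofReal (1 / p))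
  rw [ENNReal.toReal_ofReal (by positivity), one_div, ENNReal.ofReal_inv_of_pos hp,
    ENNReal.div_eq_inv_mul, inv_inv, mul_one, ← one_div] at hnorm
  refine hnorm.ae_eq ?_
  filter_upwards [h0] with x hx
  rw [Real.norm_of_nonneg hx]

theorem Integrable.rpow_one_div [IsFiniteMeasure μ] (hint : Integrable h μ) (h0 : 0 ≤ᵐ[μ] h)
    (hp : 1 ≤ p) : Integrable (fun x => h x ^ (1 / p)) μ :=
  (hint.memLp_rpow_one_div h0 (by linarith)).integrable (by simpa using hp)

theorem integral_rpow_one_div_rpow_le [IsFiniteMeasure μ] (hint : Integrable h μ)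
    (h0 : 0 ≤ᵐ[μ] h) (hp : 1 < p) :
    (∫ x, h x ^ (1 / p) ∂μ) ^ p ≤ μ.real univ ^ (p - 1) * ∫ x, h x ∂μ := by
  have hp0 : 0 < p := by linarith
  set q := p.conjExponent
  have hpq : p.HolderConjugate q := .conjExponent hp
  have holder := integral_mul_le_Lp_mul_Lq_of_nonneg hpq
    (h0.mono fun x hx => Real.rpow_nonneg hx _) (ae_of_all _ fun _ => zero_le_one)
    (hint.memLp_rpow_one_div h0 hp0) (memLp_const 1)
  have hpow : ∫ x, (h x ^ (1 / p)) ^ p ∂μ = ∫ x, h x ∂μ := by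
    refine integral_congr_ae ?_
    filter_upwards [h0] with x hx
    rw [← Real.rpow_mul hx, one_div_mul_cancel hp0.ne', Real.rpow_one]
  simp only [mul_one, Real.one_rpow, integral_const, smul_eq_mul] at holder
  rw [hpow] at holder
  have hI : 0 ≤ ∫ x, h x ∂μ := integral_nonneg_of_ae h0
  calc (∫ x, h x ^ (1 / p) ∂μ) ^ p
      ≤ ((∫ x, h x ∂μ) ^ (1 / p) * μ.real univ ^ (1 / q)) ^ p :=
        Real.rpow_le_rpow (integral_nonneg_of_ae (h0.mono fun x hx => Real.rpow_nonneg hx _))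
          holder hp0.le
    _ = μ.real univ ^ (p - 1) * ∫ x, h x ∂μ := by
        rw [Real.mul_rpow (by positivity) (by positivity), ← Real.rpow_mul hI,
          ← Real.rpow_mul measureReal_nonneg, one_div_mul_cancel hp0.ne', Real.rpow_one,
          one_div_mul_eq_div, hpq.div_conj_eq_sub_one, mul_comm]

end MeasureTheory

theorem Jp_neg (p t : ℝ) : Jp p (-t) = -Jp p t := by
  simp [Jp]

theorem Jp_of_nonneg {p t : ℝ} (hp : p ≠ 1) (ht : 0 ≤ t) : Jp p t = t ^ (p - 1) := by
  rcases ht.eq_or_lt with rfl | ht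
  · simp [Jp, Real.zero_rpow (sub_ne_zero.2 hp)]
  rw [Jp, abs_of_pos ht, show p - 1 = p - 2 + 1 by ring, Real.rpow_add_one ht.ne']

namespace Monotone

variable {g : ℝ → ℝ} {p : ℝ}

theorem intervalIntegrable_rpow_deriv (hg : Monotone g) (hp : 1 ≤ p) (a b : ℝ) :
    IntervalIntegrable (fun τ => deriv g τ ^ (1 / p)) volume a b := by
  obtain ⟨hleft, hright⟩ := (hg.monotoneOn (uIcc a b)).intervalIntegrable_deriv
  exact ⟨hleft.rpow_one_div (ae_of_all _ fun _ => hg.deriv_nonneg) hp,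
    hright.rpow_one_div (ae_of_all _ fun _ => hg.deriv_nonneg) hp⟩

theorem integral_rpow_deriv_rpow_le (hg : Monotone g) (hp : 1 < p) {a b : ℝ} (hab : b ≤ a) :
    (∫ τ in b..a, deriv g τ ^ (1 / p)) ^ p ≤ (a - b) ^ (p - 1) * (g a - g b) := by
  have hint := (hg.monotoneOn (uIcc b a)).intervalIntegrable_deriv.1
  have lebesgue := (hg.monotoneOn (uIcc b a)).intervalIntegral_deriv_mem_uIcc
  rw [uIcc_of_le (sub_nonneg.2 (hg hab))] at lebesgue
  rw [intervalIntegral.integral_of_le hab] at lebesgue ⊢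
  calc _ ≤ (volume.restrict (Ioc b a)).real univ ^ (p - 1) * ∫ τ in Ioc b a, deriv g τ :=
        integral_rpow_one_div_rpow_le hint (ae_of_all _ fun _ => hg.deriv_nonneg) hp
    _ ≤ (a - b) ^ (p - 1) * (g a - g b) := by
        rw [measureReal_restrict_apply_univ, Real.volume_real_Ioc_of_le hab]
        exact mul_le_mul_of_nonneg_left lebesgue.2 (by positivity)

end Monotone

theorem brasco_lemmaA2_general (p : ℝ) (hp : 1 < p) (g : ℝ → ℝ) (hg : Monotone g)
    (G : ℝ → ℝ)
    (hG : ∀ t, G t = ∫ τ in (0:ℝ)..t, (deriv g τ) ^ (1 / p)) (a b : ℝ) :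
    |G a - G b| ^ p ≤ Jp p (a - b) * (g a - g b) := by
  wlog hab : b ≤ a generalizing a b
  · calc |G a - G b| ^ p = |G b - G a| ^ p := by rw [abs_sub_comm]
      _ ≤ Jp p (b - a) * (g b - g a) := this b a (le_of_not_ge hab)
      _ = Jp p (a - b) * (g a - g b) := by rw [← neg_sub a b, Jp_neg]; ring
  have hint := hg.intervalIntegrable_rpow_deriv hp.le 0
  have hnonneg : 0 ≤ ∫ τ in b..a, deriv g τ ^ (1 / p) :=
    intervalIntegral.integral_nonneg hab fun _ _ => Real.rpow_nonneg hg.deriv_nonneg _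
  rw [hG, hG, intervalIntegral.integral_interval_sub_left (hint a) (hint b),
    abs_of_nonneg hnonneg, Jp_of_nonneg hp.ne' (sub_nonneg.2 hab)]
  exact hg.integral_rpow_deriv_rpow_le hp hab

theorem brasco_lemmaA2 (p : ℝ) (hp : 1 < p) (g : ℝ → ℝ) (hg : Monotone g)
    (hgd : Differentiable ℝ g) (G : ℝ → ℝ)
    (hG : ∀ t, G t = ∫ τ in (0:ℝ)..t, (deriv g τ) ^ (1 / p)) (a b : ℝ) :
    |G a - G b| ^ p ≤ Jp p (a - b) * (g a - g b) :=
  brasco_lemmaA2_general p hp g hg G hG a b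
end

section
/- Let sp = n, q, r ≥ 1 with 1 − 1/r − 1/q > 0, and set l = (p/r′)·(1 − 1/r − 1/q)^{−1}. If w ∈ L^{l,p}(Q_{R,R^{sp}}) ∩ L^{p,∞}(Q_{R,R^{sp}}), then w ∈ L^{pq′,pr′}(Q_{R,R^{sp}}) and ‖w‖_{L^{pq′,pr′}}^p ≤ R^{np/(l r′)} ( ‖w‖_{L^{p,∞}}^p + R^{−np/l} ‖w‖_{L^{l,p}}^p ). -/
/-!
On each time slice, Hölder's inequality interpolates the spatial `L^{pq'}` norm between `L^p` and
`L^l` with weights `1/r` and `1/r'` (the exponents satisfy `1/(pq') = (1/r)/p + (1/r')/l`).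
Bounding the `L^p` factor by its supremum in time and integrating in `t` gives
`‖w‖_{L^{pq',pr'}} ≤ ‖w‖_{L^{p,∞}}^{1/r} ‖w‖_{L^{l,p}}^{1/r'}`. Weighted AM-GM, applied after
moving the factor `R^{-np/l}` onto the second term, turns this product into the stated sum.
-/

open MeasureTheory Metric

/-- Mixed space-time norm `‖u‖_{L^{q,r}} = (∫_J (∫_Ω |u|^q dx)^{r/q} dt)^{1/r}`. -/
noncomputable def mixedNorm (n : ℕ) (q r : ℝ) (Ω : Set (EuclideanSpace ℝ (Fin n)))
    (J : Set ℝ) (u : EuclideanSpace ℝ (Fin n) → ℝ → ℝ) : ℝ :=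
  (∫ t in J, (∫ x in Ω, |u x t| ^ q) ^ (r / q)) ^ (1 / r)

/-- Membership in the mixed space `L^{q,r}(Ω×J)`. -/
def MemMixed (n : ℕ) (q r : ℝ) (Ω : Set (EuclideanSpace ℝ (Fin n)))
    (J : Set ℝ) (u : EuclideanSpace ℝ (Fin n) → ℝ → ℝ) : Prop :=
  (∀ t ∈ J, IntegrableOn (fun x => |u x t| ^ q) Ω) ∧
  IntegrableOn (fun t => (∫ x in Ω, |u x t| ^ q) ^ (r / q)) J

/-- The `L^{q,∞}` norm: supremum in time of the spatial `L^q` norm. -/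
noncomputable def timeSupNorm (n : ℕ) (q : ℝ) (Ω : Set (EuclideanSpace ℝ (Fin n)))
    (J : Set ℝ) (u : EuclideanSpace ℝ (Fin n) → ℝ → ℝ) : ℝ :=
  ⨆ t ∈ J, (∫ x in Ω, |u x t| ^ q) ^ (1 / q)

/-- Membership in `L^{q,∞}(Ω×J)`. -/
def MemTimeSup (n : ℕ) (q : ℝ) (Ω : Set (EuclideanSpace ℝ (Fin n)))
    (J : Set ℝ) (u : EuclideanSpace ℝ (Fin n) → ℝ → ℝ) : Prop :=
  (∀ t ∈ J, IntegrableOn (fun x => |u x t| ^ q) Ω) ∧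
  BddAbove ((fun t => (∫ x in Ω, |u x t| ^ q) ^ (1 / q)) '' J)

section Interpolation

variable {α : Type*} [MeasurableSpace α] {μ : Measure α} {f : α → ℝ}

theorem memLp_rpow_of_integrable_rpow_mul (hf : Measurable f) (hf0 : ∀ x, 0 ≤ f x) {u e : ℝ}
    (he : 0 < e) (hint : Integrable (fun x => f x ^ (u * e)) μ) :
    MemLp (fun x => f x ^ u) (ENNReal.ofReal e) μ := by
  refine (integrable_norm_rpow_iff (hf.pow_const u).aestronglyMeasurable (by simpa using he)
    ENNReal.ofReal_ne_top).1 ?_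
  simpa [ENNReal.toReal_ofReal he.le, Real.norm_of_nonneg (Real.rpow_nonneg (hf0 _) u),
    ← Real.rpow_mul (hf0 _)] using hint

theorem integrable_rpow_and_integral_rpow_le_of_one_div_eq (hf : Measurable f)
    (hf0 : ∀ x, 0 ≤ f x) {p l a θ : ℝ} (hp : 0 < p) (hl : 0 < l) (hθ0 : 0 < θ) (hθ1 : θ < 1)
    (ha : 1 / a = (1 - θ) / p + θ / l)
    (hfp : Integrable (fun x => f x ^ p) μ) (hfl : Integrable (fun x => f x ^ l) μ) :
    Integrable (fun x => f x ^ a) μ ∧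
      ∫ x, f x ^ a ∂μ ≤
        (∫ x, f x ^ p ∂μ) ^ ((1 - θ) * a / p) * (∫ x, f x ^ l ∂μ) ^ (θ * a / l) := by
  have hθ1' : 0 < 1 - θ := sub_pos.2 hθ1
  have ha0 : 0 < a := one_div_pos.1 (ha ▸ by positivity)
  have hconj : (p / ((1 - θ) * a)).HolderConjugate (l / (θ * a)) := by
    refine ⟨?_, by positivity, by positivity⟩
    rw [inv_div, inv_div, inv_one, mul_div_right_comm, mul_div_right_comm θ, ← add_mul, ← ha,
      one_div_mul_cancel ha0.ne']
  have hF : MemLp (fun x => f x ^ ((1 - θ) * a)) (ENNReal.ofReal (p / ((1 - θ) * a))) μ :=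
    memLp_rpow_of_integrable_rpow_mul hf hf0 (by positivity) (by field_simp; exact hfp)
  have hG : MemLp (fun x => f x ^ (θ * a)) (ENNReal.ofReal (l / (θ * a))) μ :=
    memLp_rpow_of_integrable_rpow_mul hf hf0 (by positivity) (by field_simp; exact hfl)
  have hsplit : (fun x => f x ^ a) = fun x => f x ^ ((1 - θ) * a) * f x ^ (θ * a) := by
    funext x
    rw [← Real.rpow_add' (hf0 x) (by positivity)]
    ring_nf
  have := hconj.ennrealOfReal
  refine ⟨hsplit ▸ hF.integrable_mul hG, ?_⟩
  have h := integral_mul_le_Lp_mul_Lq_of_nonneg hconj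
    (Filter.Eventually.of_forall fun x => Real.rpow_nonneg (hf0 x) _)
    (Filter.Eventually.of_forall fun x => Real.rpow_nonneg (hf0 x) _) hF hG
  simp_rw [← Real.rpow_mul (hf0 _)] at h
  rw [hsplit]
  convert h using 3 <;> field_simp

theorem rpow_mul_rpow_le_rpow_neg_mul_add {x y c θ : ℝ} (hx : 0 ≤ x) (hy : 0 ≤ y)
    (hc : 0 < c) (hθ0 : 0 ≤ θ) (hθ1 : θ ≤ 1) : x ^ (1 - θ) * y ^ θ ≤ c ^ (-θ) * (x + c * y) := by
  have hscale : x ^ (1 - θ) * y ^ θ = c ^ (-θ) * (x ^ (1 - θ) * (c * y) ^ θ) := by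
    rw [Real.mul_rpow hc.le hy, Real.rpow_neg hc.le]
    field_simp
  have hcy : 0 ≤ c * y := by positivity
  rw [hscale]
  gcongr
  calc x ^ (1 - θ) * (c * y) ^ θ ≤ (1 - θ) * x + θ * (c * y) :=
        Real.geom_mean_le_arith_mean2_weighted (by linarith) hθ0 hx hcy (by ring)
    _ ≤ x + c * y := by nlinarith

theorem rpow_le_rpow_neg_mul_add_of_le_rpow_mul_rpow {N x y c θ p : ℝ} (hN : 0 ≤ N)
    (hx : 0 ≤ x) (hy : 0 ≤ y) (hc : 0 < c) (hθ0 : 0 ≤ θ) (hθ1 : θ ≤ 1) (hp : 0 ≤ p)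
    (h : N ≤ x ^ (1 - θ) * y ^ θ) : N ^ p ≤ c ^ (-θ) * (x ^ p + c * y ^ p) :=
  calc N ^ p ≤ (x ^ (1 - θ) * y ^ θ) ^ p := Real.rpow_le_rpow hN h hp
    _ = (x ^ p) ^ (1 - θ) * (y ^ p) ^ θ := by
        rw [Real.mul_rpow (by positivity) (by positivity), ← Real.rpow_mul hx,
          ← Real.rpow_mul hx, ← Real.rpow_mul hy, ← Real.rpow_mul hy, mul_comm p, mul_comm p]
    _ ≤ c ^ (-θ) * (x ^ p + c * y ^ p) :=
        rpow_mul_rpow_le_rpow_neg_mul_add (by positivity) (by positivity) hc hθ0 hθ1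

end Interpolation

section MixedNorms

variable {n : ℕ} {Ω : Set (EuclideanSpace ℝ (Fin n))} {J : Set ℝ}
  {w : EuclideanSpace ℝ (Fin n) → ℝ → ℝ}

theorem mixedNorm_nonneg {q r : ℝ} : 0 ≤ mixedNorm n q r Ω J w :=
  Real.rpow_nonneg (integral_nonneg fun _ =>
    Real.rpow_nonneg (integral_nonneg fun _ => Real.rpow_nonneg (abs_nonneg _) _) _) _

theorem timeSupNorm_nonneg {q : ℝ} : 0 ≤ timeSupNorm n q Ω J w :=
  Real.iSup_nonneg fun _ => Real.iSup_nonneg fun _ =>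
    Real.rpow_nonneg (integral_nonneg fun _ => Real.rpow_nonneg (abs_nonneg _) _) _

theorem MemTimeSup.integral_rpow_le {q : ℝ} (hw : MemTimeSup n q Ω J w) (hq : 0 < q) {t : ℝ}
    (ht : t ∈ J) : ∫ x in Ω, |w x t| ^ q ≤ timeSupNorm n q Ω J w ^ q := by
  have hbdd :
      BddAbove (⋃ t, Set.range fun (_ : t ∈ J) => (∫ x in Ω, |w x t| ^ q) ^ (1 / q)) :=
    hw.2.mono <| Set.iUnion_subset fun t =>
      Set.range_subset_iff.2 fun ht => Set.mem_image_of_mem _ ht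
  have hle : (∫ x in Ω, |w x t| ^ q) ^ (1 / q) ≤ timeSupNorm n q Ω J w :=
    le_ciSup₂ hbdd t ht
  rwa [one_div, Real.rpow_inv_le_iff_of_pos (integral_nonneg fun _ => Real.rpow_nonneg
    (abs_nonneg _) _) timeSupNorm_nonneg hq] at hle

theorem measurable_setIntegral_rpow_abs (hw : Measurable (Function.uncurry w)) (c : ℝ) :
    Measurable fun t => ∫ x in Ω, |w x t| ^ c :=
  (StronglyMeasurable.integral_prod_left
    ((hw.abs.pow_const c).stronglyMeasurable (f := fun z => |Function.uncurry w z| ^ c))).measurable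

theorem memMixed_and_mixedNorm_le_of_one_div_eq (hJ : MeasurableSet J)
    (hw : Measurable (Function.uncurry w)) {p l a b θ : ℝ} (hp : 0 < p) (hl : 0 < l)
    (hθ0 : 0 < θ) (hθ1 : θ < 1) (ha : 1 / a = (1 - θ) / p + θ / l) (hb : θ * b = p)
    (hwl : MemMixed n l p Ω J w) (hwp : MemTimeSup n p Ω J w) :
    MemMixed n a b Ω J w ∧
      mixedNorm n a b Ω J w ≤
        timeSupNorm n p Ω J w ^ (1 - θ) * mixedNorm n l p Ω J w ^ θ := by
  subst hb
  have hb0 : 0 < b := pos_of_mul_pos_right hp hθ0.le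
  have ha0 : 0 < a := one_div_pos.1 (ha ▸ add_pos (div_pos (sub_pos.2 hθ1) hp) (div_pos hθ0 hl))
  set S := timeSupNorm n (θ * b) Ω J w
  have hS0 : 0 ≤ S := timeSupNorm_nonneg
  have hwt : ∀ t, Measurable fun x => |w x t| := fun t =>
    (hw.comp measurable_prodMk_right).abs
  have hint0 : ∀ t (c : ℝ), 0 ≤ ∫ x in Ω, |w x t| ^ c := fun t c =>
    integral_nonneg fun x => Real.rpow_nonneg (abs_nonneg (w x t)) c
  have hslice : ∀ t ∈ J, IntegrableOn (fun x => |w x t| ^ a) Ω ∧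
      (∫ x in Ω, |w x t| ^ a) ^ (b / a) ≤
        (S ^ (θ * b)) ^ ((1 - θ) / θ) * (∫ x in Ω, |w x t| ^ l) ^ (θ * b / l) := by
    intro t ht
    obtain ⟨hint, hle⟩ := integrable_rpow_and_integral_rpow_le_of_one_div_eq
      (hwt t) (fun x => abs_nonneg _) hp hl hθ0 hθ1 ha
      (hwp.1 t ht) (hwl.1 t ht)
    refine ⟨hint, ?_⟩
    calc (∫ x in Ω, |w x t| ^ a) ^ (b / a)
        ≤ ((∫ x in Ω, |w x t| ^ (θ * b)) ^ ((1 - θ) * a / (θ * b)) *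
            (∫ x in Ω, |w x t| ^ l) ^ (θ * a / l)) ^ (b / a) :=
          Real.rpow_le_rpow (hint0 t a) hle (by positivity)
      _ = (∫ x in Ω, |w x t| ^ (θ * b)) ^ ((1 - θ) / θ) *
            (∫ x in Ω, |w x t| ^ l) ^ (θ * b / l) := by
          rw [Real.mul_rpow (Real.rpow_nonneg (hint0 t _) _) (Real.rpow_nonneg (hint0 t _) _),
            ← Real.rpow_mul (hint0 t _), ← Real.rpow_mul (hint0 t _)]
          congr 2 <;> field_simp
      _ ≤ (S ^ (θ * b)) ^ ((1 - θ) / θ) * (∫ x in Ω, |w x t| ^ l) ^ (θ * b / l) := by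
          gcongr
          exact hwp.integral_rpow_le hp ht
  have hmeas : AEStronglyMeasurable (fun t => (∫ x in Ω, |w x t| ^ a) ^ (b / a))
      (volume.restrict J) :=
    ((measurable_setIntegral_rpow_abs hw a).pow_const _).aestronglyMeasurable
  have hintJ : IntegrableOn (fun t => (∫ x in Ω, |w x t| ^ a) ^ (b / a)) J := by
    refine (hwl.2.const_mul ((S ^ (θ * b)) ^ ((1 - θ) / θ))).mono' hmeas ?_
    filter_upwards [ae_restrict_mem hJ] with t ht
    rw [Real.norm_of_nonneg (Real.rpow_nonneg (hint0 t a) _)]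
    exact (hslice t ht).2
  refine ⟨⟨fun t ht => (hslice t ht).1, hintJ⟩, ?_⟩
  have hM0 : 0 ≤ ∫ t in J, (∫ x in Ω, |w x t| ^ l) ^ (θ * b / l) :=
    integral_nonneg fun t => Real.rpow_nonneg (hint0 t l) _
  calc mixedNorm n a b Ω J w
      ≤ ((S ^ (θ * b)) ^ ((1 - θ) / θ) *
          ∫ t in J, (∫ x in Ω, |w x t| ^ l) ^ (θ * b / l)) ^ (1 / b) := by
        refine Real.rpow_le_rpow (integral_nonneg fun t => Real.rpow_nonneg (hint0 t a) _) ?_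
          (by positivity)
        rw [← integral_const_mul]
        exact setIntegral_mono_on hintJ (hwl.2.const_mul _) hJ fun t ht => (hslice t ht).2
    _ = S ^ (1 - θ) * mixedNorm n l (θ * b) Ω J w ^ θ := by
        rw [mixedNorm, Real.mul_rpow (by positivity) hM0, ← Real.rpow_mul hS0,
          ← Real.rpow_mul hS0, ← Real.rpow_mul hM0]
        congr 2 <;> field_simp

end MixedNorms

theorem one_div_mul_conjExponent_eq_add {p q r l : ℝ} (hp : p ≠ 0) (hq : q ≠ 0) (hr0 : r ≠ 0)
    (hr1 : r ≠ 1) (hl : l = p / (r / (r - 1)) * (1 - 1 / r - 1 / q)⁻¹) :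
    1 / (p * (q / (q - 1))) = (1 - (r - 1) / r) / p + (r - 1) / r / l := by
  have : r - 1 ≠ 0 := sub_ne_zero.2 hr1
  subst hl
  field_simp
  ring

theorem interpolation_critical_general (n : ℕ) (s p q r R T : ℝ)
    (hp : 2 ≤ p) (hR : 0 < R)
    (hq : 1 ≤ q) (hr : 1 ≤ r) (hqr : 0 < 1 - 1 / r - 1 / q)
    (l : ℝ) (hl : l = p / (r / (r - 1)) * (1 - 1 / r - 1 / q)⁻¹)
    (w : EuclideanSpace ℝ (Fin n) → ℝ → ℝ)
    (hmeas : Measurable (Function.uncurry w))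
    (hmemS : MemMixed n l p (ball (0 : EuclideanSpace ℝ (Fin n)) R)
      (Set.Ioc (T - R ^ (s * p)) T) w)
    (hmemI : MemTimeSup n p (ball (0 : EuclideanSpace ℝ (Fin n)) R)
      (Set.Ioc (T - R ^ (s * p)) T) w) :
    MemMixed n (p * (q / (q - 1))) (p * (r / (r - 1)))
        (ball (0 : EuclideanSpace ℝ (Fin n)) R) (Set.Ioc (T - R ^ (s * p)) T) w ∧
    mixedNorm n (p * (q / (q - 1))) (p * (r / (r - 1)))
        (ball (0 : EuclideanSpace ℝ (Fin n)) R) (Set.Ioc (T - R ^ (s * p)) T) w ^ p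
      ≤ R ^ ((n : ℝ) * p / (l * (r / (r - 1)))) *
        (timeSupNorm n p (ball (0 : EuclideanSpace ℝ (Fin n)) R)
            (Set.Ioc (T - R ^ (s * p)) T) w ^ p
          + R ^ (-(n : ℝ) * p / l) *
            mixedNorm n l p (ball (0 : EuclideanSpace ℝ (Fin n)) R)
              (Set.Ioc (T - R ^ (s * p)) T) w ^ p) := by
  have hp0 : 0 < p := by linarith
  have hr1 : 1 < r := by
    refine lt_of_le_of_ne hr fun h => ?_
    subst h
    linarith [one_div_pos.2 (zero_lt_one.trans_le hq)]
  have hr0 : 0 < r - 1 := sub_pos.2 hr1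
  have hl0 : 0 < l := hl ▸ by positivity
  have hθ0 : 0 < (r - 1) / r := by positivity
  have hθ1 : (r - 1) / r < 1 := (div_lt_one (by positivity)).2 (by linarith)
  have ha := one_div_mul_conjExponent_eq_add hp0.ne' (by linarith) (by linarith) hr1.ne' hl
  obtain ⟨hmem, hle⟩ := memMixed_and_mixedNorm_le_of_one_div_eq (b := p * (r / (r - 1)))
    measurableSet_Ioc hmeas hp0 hl0 hθ0 hθ1 ha (by field_simp) hmemS hmemI
  refine ⟨hmem, ?_⟩
  calc _ ≤ (R ^ (-(n : ℝ) * p / l)) ^ (-((r - 1) / r)) *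
        (_ ^ p + R ^ (-(n : ℝ) * p / l) * _ ^ p) :=
        rpow_le_rpow_neg_mul_add_of_le_rpow_mul_rpow mixedNorm_nonneg timeSupNorm_nonneg
          mixedNorm_nonneg (by positivity) hθ0.le hθ1.le hp0.le hle
    _ = _ := by
        rw [← Real.rpow_mul hR.le]
        congr 2
        field_simp

theorem interpolation_critical (n : ℕ) (s p q r R T : ℝ)
    (hs0 : 0 < s) (hs1 : s < 1) (hp : 2 ≤ p) (hspn : s * p = n) (hR : 0 < R)
    (hq : 1 ≤ q) (hr : 1 ≤ r) (hqr : 0 < 1 - 1 / r - 1 / q)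
    (l : ℝ) (hl : l = p / (r / (r - 1)) * (1 - 1 / r - 1 / q)⁻¹)
    (w : EuclideanSpace ℝ (Fin n) → ℝ → ℝ)
    (hmeas : Measurable (Function.uncurry w))
    (hmemS : MemMixed n l p (ball (0 : EuclideanSpace ℝ (Fin n)) R)
      (Set.Ioc (T - R ^ (s * p)) T) w)
    (hmemI : MemTimeSup n p (ball (0 : EuclideanSpace ℝ (Fin n)) R)
      (Set.Ioc (T - R ^ (s * p)) T) w) :
    MemMixed n (p * (q / (q - 1))) (p * (r / (r - 1)))
        (ball (0 : EuclideanSpace ℝ (Fin n)) R) (Set.Ioc (T - R ^ (s * p)) T) w ∧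
    mixedNorm n (p * (q / (q - 1))) (p * (r / (r - 1)))
        (ball (0 : EuclideanSpace ℝ (Fin n)) R) (Set.Ioc (T - R ^ (s * p)) T) w ^ p
      ≤ R ^ ((n : ℝ) * p / (l * (r / (r - 1)))) *
        (timeSupNorm n p (ball (0 : EuclideanSpace ℝ (Fin n)) R)
            (Set.Ioc (T - R ^ (s * p)) T) w ^ p
          + R ^ (-(n : ℝ) * p / l) *
            mixedNorm n l p (ball (0 : EuclideanSpace ℝ (Fin n)) R)
              (Set.Ioc (T - R ^ (s * p)) T) w ^ p) :=
  interpolation_critical_general n s p q r R T hp hR hq hr hqr l hl w hmeas hmemS hmemI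
end
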